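/- arXiv:1604.04023 — 2 statements merged into one kernel-verified Lean document; each statement's English description precedes it below -/
import Mathlib

section
/- Let q be a power of a prime, let n ≥ 2, let h(x) ∈ F_q[x] have degree n, and let L be any subfield of F_{q^n} containing the image h(F_{q^n}^×). Define S(x) = (1 − h(x)^{#L^×}) mod (x^{q^n−1} − 1) ∈ F_q[x], and write S(x) = Σ_{i=0}^{q^n−2} s_i x^i. If the cyclic sequence (s_i)_{i=0}^{q^n−2}, viewed as a function Z/(q^n−1)Z → F_q, has least period r with r not dividing (q^n−1)/Φ_n(q), then h(x) is irreducible over F_q. -/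
open scoped Classical

noncomputable section

/-- `g` is `r`-periodic on `Z/NZ`. -/
def IsPeriodOf {N : ℕ} {α : Type*} (g : ZMod N → α) (r : ℕ) : Prop :=
  ∀ m : ZMod N, g (m + (r : ZMod N)) = g m

/-- `r` is the least period of `g`. -/
def IsLeastPeriod {N : ℕ} {α : Type*} (g : ZMod N → α) (r : ℕ) : Prop :=
  0 < r ∧ IsPeriodOf g r ∧ ∀ s : ℕ, 0 < s → IsPeriodOf g s → r ≤ s

/-!
If `h` were reducible, every root `α ∈ F_{q^n}^×` of `h` would have degree `d < n`, `d ∣ n` over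
`F_q`, so `α ^ (q^d - 1) = 1`; as `(q^d - 1) Φ_n(q) ∣ q^n - 1`, this gives `α ^ M = 1` for
`M = (q^n - 1) / Φ_n(q)`. At every other `α ∈ F_{q^n}^×`, `h(α)` is a unit of `L`, so
`S(α) = 1 - h(α) ^ #L^× = 0`. Hence `S (X^M - 1)` vanishes on `F_{q^n}^×` and is divisible by
`X^(q^n-1) - 1`, which says that the cyclic coefficient sequence of `S` is `M`-periodic, so `r ∣ M`.
-/

open Polynomial Module IntermediateField

theorem IsLeastPeriod.dvd_of_isPeriodOf {N : ℕ} {α : Type*} {g : ZMod N → α} {r s : ℕ}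
    (hr : IsLeastPeriod g r) (hs : IsPeriodOf g s) : r ∣ s := by
  obtain ⟨hr0, hrp, hmin⟩ := hr
  have hmod : IsPeriodOf g (s % r) := by
    have hcast : ((s % r : ℕ) : ZMod N) = s - (s / r) • (r : ZMod N) := by
      rw [eq_sub_iff_add_eq, nsmul_eq_mul, ← Nat.cast_mul, ← Nat.cast_add, Nat.mod_add_div']
    unfold IsPeriodOf
    rw [hcast]
    exact Function.Periodic.sub_period hs (Function.Periodic.nsmul hrp _)
  by_contra hndvd
  have hpos : 0 < s % r := Nat.pos_of_ne_zero (mt Nat.dvd_of_mod_eq_zero hndvd)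
  exact (Nat.mod_lt s hr0).not_ge (hmin _ hpos hmod)

section CyclicReduction

variable (R : Type*) [CommSemiring R] (N : ℕ)

/-- The quotient map `R[X] → R[X] / (X^N - 1)`, realised in the group algebra `R[ℤ/Nℤ]`. -/
def cyclicReduction : R[X] →ₐ[R] AddMonoidAlgebra R (ZMod N) :=
  aeval (AddMonoidAlgebra.single 1 1)

variable {R N}

theorem cyclicReduction_X_pow (k : ℕ) :
    cyclicReduction R N (X ^ k) = AddMonoidAlgebra.single (k : ZMod N) 1 := by
  simp [cyclicReduction, AddMonoidAlgebra.single_pow]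

theorem coeff_cyclicReduction [NeZero N] {p : R[X]} (hp : p.natDegree < N) (m : ZMod N) :
    (cyclicReduction R N p).coeff m = p.coeff m.val := by
  rw [cyclicReduction, aeval_eq_sum_range' hp]
  simp only [AddMonoidAlgebra.single_pow, nsmul_eq_mul, mul_one, one_pow,
    AddMonoidAlgebra.smul_single, smul_eq_mul, AddMonoidAlgebra.coeff_sum,
    AddMonoidAlgebra.coeff_single, Finsupp.coe_finsetSum, Finset.sum_apply]
  rw [Finset.sum_eq_single_of_mem m.val (Finset.mem_range.2 m.val_lt)]
  · simp
  · intro c hc hne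
    rw [Finsupp.single_apply, if_neg]
    rintro rfl
    exact hne (ZMod.val_natCast_of_lt (Finset.mem_range.1 hc)).symm

theorem isPeriodOf_coeff_of_dvd_mul_X_pow_sub_one {R : Type*} [CommRing R] {N M : ℕ} [NeZero N]
    {p : R[X]} (hp : p.natDegree < N) (hdvd : X ^ N - 1 ∣ p * (X ^ M - 1)) :
    IsPeriodOf (fun i : ZMod N => p.coeff i.val) M := by
  set f := cyclicReduction R N p
  have hker : cyclicReduction R N (X ^ N - 1) = 0 := by
    simp [cyclicReduction_X_pow, AddMonoidAlgebra.one_def]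
  have hfix : f * AddMonoidAlgebra.single (M : ZMod N) 1 = f := by
    obtain ⟨c, hc⟩ := hdvd
    have := congrArg (cyclicReduction R N) hc
    rwa [map_mul, map_mul, hker, zero_mul, map_sub, map_one, cyclicReduction_X_pow, mul_sub,
      mul_one, sub_eq_zero] at this
  intro m
  calc p.coeff (m + M).val = f.coeff (m + M) := (coeff_cyclicReduction hp _).symm
    _ = (f * AddMonoidAlgebra.single (M : ZMod N) 1).coeff (m + M) := by rw [hfix]
    _ = p.coeff m.val := by
        rw [AddMonoidAlgebra.coeff_mul_single_apply, add_neg_cancel_right, mul_one,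
          coeff_cyclicReduction hp]

end CyclicReduction

section XPowSubOne

variable {F : Type*} [Field F] {N : ℕ}

theorem natDegree_mod_X_pow_sub_one_lt (p : F[X]) (hN : N ≠ 0) :
    (p % (X ^ N - 1)).natDegree < N := by
  have hdeg : (X ^ N - 1 : F[X]).natDegree = N := natDegree_X_pow_sub_C
  calc _ < (X ^ N - 1 : F[X]).natDegree := natDegree_mod_lt p (hdeg.trans_ne hN)
    _ = N := hdeg

theorem aeval_mod_X_pow_sub_one_of_pow_eq_one {K : Type*} [CommRing K] [Algebra F K] (p : F[X])
    {α : K} (hα : α ^ N = 1) : aeval α (p % (X ^ N - 1)) = aeval α p := by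
  simp [EuclideanDomain.mod_eq_sub_mul_div, hα]

theorem X_pow_card_sub_one_sub_one_dvd_of_aeval_units_eq_zero {K : Type*} [Field K] [Fintype K]
    [Algebra F K] {p : F[X]} (hp : ∀ α : Kˣ, aeval (α : K) p = 0) :
    X ^ (Fintype.card K - 1) - 1 ∣ p := by
  rw [← EuclideanDomain.mod_eq_zero]
  refine map_injective (algebraMap F K) (algebraMap F K).injective ?_
  rw [Polynomial.map_zero]
  refine eq_zero_of_natDegree_lt_card_of_eval_eq_zero _ Units.val_injective (fun α => ?_) ?_
  · rw [eval_map_algebraMap, aeval_mod_X_pow_sub_one_of_pow_eq_one _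
      (FiniteField.pow_card_sub_one_eq_one _ α.ne_zero), hp α]
  · rw [natDegree_map, Fintype.card_units]
    exact natDegree_mod_X_pow_sub_one_lt p (Nat.sub_ne_zero_of_lt Fintype.one_lt_card)

end XPowSubOne

theorem sub_one_dvd_div_eval_cyclotomic {q n e : ℕ} (hq : 0 < q) (he : e ∈ n.properDivisors) :
    q ^ e - 1 ∣ (q ^ n - 1) / ((cyclotomic n ℤ).eval (q : ℤ)).toNat := by
  apply Nat.dvd_div_of_mul_dvd
  have hΦ := Int.toNat_of_nonneg (cyclotomic_nonneg n (by exact_mod_cast hq : (1 : ℤ) ≤ q))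
  rw [← Int.natCast_dvd_natCast, Nat.cast_mul, hΦ, mul_comm]
  push_cast [Nat.one_le_pow _ _ hq]
  simpa using eval_dvd (x := (q : ℤ)) (X_pow_sub_one_mul_cyclotomic_dvd_X_pow_sub_one_of_dvd ℤ he)

theorem natDegree_minpoly_lt_of_not_irreducible {F K : Type*} [Field F] [CommRing K] [IsDomain K]
    [Algebra F K] {h : F[X]} (hirr : ¬Irreducible h) (h0 : h ≠ 0) {α : K}
    (hα : aeval α h = 0) : (minpoly F α).natDegree < h.natDegree := by
  have hint : IsIntegral F α := IsAlgebraic.isIntegral ⟨h, h0, hα⟩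
  have hdvd : minpoly F α ∣ h := minpoly.dvd F α hα
  refine (natDegree_le_of_dvd hdvd h0).lt_of_ne fun heq => hirr ?_
  rw [eq_leadingCoeff_mul_of_monic_of_dvd_of_natDegree_le (minpoly.monic hint) hdvd heq.ge]
  refine (irreducible_isUnit_mul ?_).2 (minpoly.irreducible hint)
  simpa using leadingCoeff_ne_zero.2 h0

theorem pow_card_pow_natDegree_minpoly_sub_one_eq_one {F K : Type*} [Field F] [Fintype F]
    [Field K] [Algebra F K] [Finite K] {α : K} (hα : α ≠ 0) :
    α ^ (Fintype.card F ^ (minpoly F α).natDegree - 1) = 1 := by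
  have hint : IsIntegral F α := .of_finite F α
  have : Fintype F⟮α⟯ := Fintype.ofFinite _
  have hcard : Fintype.card F⟮α⟯ = Fintype.card F ^ (minpoly F α).natDegree := by
    rw [card_eq_pow_finrank (K := F), adjoin.finrank hint]
  have hgen := FiniteField.pow_card_sub_one_eq_one (AdjoinSimple.gen F α)
    (by rwa [ne_eq, ← ZeroMemClass.coe_eq_zero, AdjoinSimple.coe_gen])
  rw [hcard] at hgen
  simpa using congrArg (algebraMap F⟮α⟯ K) hgen

theorem pow_div_eval_cyclotomic_eq_one_of_not_irreducible {F K : Type*} [Field F] [Fintype F]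
    [Field K] [Finite K] [Algebra F K] {h : F[X]} (hirr : ¬Irreducible h)
    (hdeg : h.natDegree = finrank F K) {α : K} (hα : α ≠ 0) (hroot : aeval α h = 0) :
    α ^ ((Fintype.card F ^ finrank F K - 1) /
      ((cyclotomic (finrank F K) ℤ).eval (Fintype.card F : ℤ)).toNat) = 1 := by
  have hint : IsIntegral F α := .of_finite F α
  have h0 : h ≠ 0 := by
    rintro rfl
    exact finrank_pos.ne (by simpa using hdeg)
  have hd : (minpoly F α).natDegree ∈ (finrank F K).properDivisors :=
    Nat.mem_properDivisors.2
      ⟨minpoly.degree_dvd hint, hdeg ▸ natDegree_minpoly_lt_of_not_irreducible hirr h0 hroot⟩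
  obtain ⟨t, ht⟩ := sub_one_dvd_div_eval_cyclotomic (Fintype.card_pos (α := F)) hd
  rw [ht, pow_mul, pow_card_pow_natDegree_minpoly_sub_one_eq_one hα, one_pow]

theorem finrank_eq_of_card_eq_pow {F V : Type*} [Field F] [Fintype F] [AddCommGroup V]
    [Module F V] [Fintype V] {n : ℕ} (hV : Fintype.card V = Fintype.card F ^ n) :
    finrank F V = n :=
  Nat.pow_right_injective Fintype.one_lt_card (card_eq_pow_finrank.symm.trans hV)

theorem Subfield.pow_natCard_units_eq_one {K : Type*} [DivisionRing K] (L : Subfield K) {x : K}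
    (hx : x ∈ L) (hx0 : x ≠ 0) : x ^ Nat.card Lˣ = 1 := by
  have hu := pow_card_eq_one' (x := Units.mk0 (⟨x, hx⟩ : L)
    (by rwa [ne_eq, ← ZeroMemClass.coe_eq_zero]))
  have := congrArg (fun u : Lˣ => ((u : L) : K)) hu
  rwa [Units.val_pow_eq_pow_val, Units.val_mk0, SubmonoidClass.coe_pow, Units.val_one,
    OneMemClass.coe_one] at this

theorem irreducible_of_leastPeriod_not_dvd_general
    (q n : ℕ)
    (Fq Fqn : Type) [Field Fq] [Fintype Fq] [Field Fqn] [Fintype Fqn]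
    [Algebra Fq Fqn]
    (hq : Fintype.card Fq = q) (hqn : Fintype.card Fqn = q ^ n)
    [NeZero (q ^ n - 1)]
    (h : Polynomial Fq) (hdeg : h.natDegree = n) (L : Subfield Fqn)
    (hL : ∀ x : Fqn, x ≠ 0 → Polynomial.aeval x h ∈ L)
    (S : Polynomial Fq)
    (hS : S = (1 - h ^ Nat.card Lˣ) % (Polynomial.X ^ (q ^ n - 1) - 1))
    (r : ℕ)
    (hr : IsLeastPeriod (fun i : ZMod (q ^ n - 1) => S.coeff i.val) r)
    (hdvd : ¬ r ∣ (q ^ n - 1) / ((Polynomial.cyclotomic n ℤ).eval (q : ℤ)).toNat) :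
    Irreducible h := by
  by_contra hirr
  have hrank : finrank Fq Fqn = n := finrank_eq_of_card_eq_pow (hq ▸ hqn)
  set M := (q ^ n - 1) / ((cyclotomic n ℤ).eval (q : ℤ)).toNat
  have hvanish (α : Fqnˣ) : aeval (α : Fqn) (S * (X ^ M - 1)) = 0 := by
    by_cases hαh : aeval (α : Fqn) h = 0
    · have hαM : (α : Fqn) ^ M = 1 := by
        simpa [hrank, hq] using pow_div_eval_cyclotomic_eq_one_of_not_irreducible hirr
          (hdeg.trans hrank.symm) α.ne_zero hαh
      simp [hαM]
    · have hαN : (α : Fqn) ^ (q ^ n - 1) = 1 :=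
        hqn ▸ FiniteField.pow_card_sub_one_eq_one _ α.ne_zero
      rw [map_mul, hS, aeval_mod_X_pow_sub_one_of_pow_eq_one _ hαN, map_sub, map_one, map_pow,
        L.pow_natCard_units_eq_one (hL α α.ne_zero) hαh, sub_self, zero_mul]
  have hdvdX : X ^ (q ^ n - 1) - 1 ∣ S * (X ^ M - 1) :=
    hqn ▸ X_pow_card_sub_one_sub_one_dvd_of_aeval_units_eq_zero hvanish
  have hSdeg : S.natDegree < q ^ n - 1 := hS ▸ natDegree_mod_X_pow_sub_one_lt _ (NeZero.ne _)
  exact hdvd (hr.dvd_of_isPeriodOf (isPeriodOf_coeff_of_dvd_mul_X_pow_sub_one hSdeg hdvdX))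

/-- Proposition 1.4: with the notations of Lemma 1.3, if `h` has degree `n ≥ 2`
and the cyclic sequence of coefficients of `S(x)` has least period `r` with
`r ∤ (q^n-1)/Φ_n(q)`, then `h` is irreducible over `F_q`. -/
theorem irreducible_of_leastPeriod_not_dvd
    (q n : ℕ) (hn : 2 ≤ n)
    (Fq Fqn : Type) [Field Fq] [Fintype Fq] [Field Fqn] [Fintype Fqn]
    [Algebra Fq Fqn]
    (hq : Fintype.card Fq = q) (hqn : Fintype.card Fqn = q ^ n)
    [NeZero (q ^ n - 1)]
    (h : Polynomial Fq) (hdeg : h.natDegree = n) (L : Subfield Fqn)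
    (hL : ∀ x : Fqn, x ≠ 0 → Polynomial.aeval x h ∈ L)
    (S : Polynomial Fq)
    (hS : S = (1 - h ^ Nat.card Lˣ) % (Polynomial.X ^ (q ^ n - 1) - 1))
    (r : ℕ)
    (hr : IsLeastPeriod (fun i : ZMod (q ^ n - 1) => S.coeff i.val) r)
    (hdvd : ¬ r ∣ (q ^ n - 1) / ((Polynomial.cyclotomic n ℤ).eval (q : ℤ)).toNat) :
    Irreducible h :=
  irreducible_of_leastPeriod_not_dvd_general q n Fq Fqn hq hqn h hdeg L hL S hS r hr hdvd

end
end

section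
/- Fix a prime power q, integers n ≥ 2 and 1 ≤ w ≤ n, and c ∈ F_q; if q = 2, further assume w ≠ n. If the function Δ_{w,c} : Z/(q^n−1)Z → F_q defined by Δ_{w,c} = δ_0 − ((−1)^w δ_w − c δ_0)^{⊗(q−1)} has least period r with r not dividing (q^n−1)/Φ_n(q), then there exists a monic irreducible polynomial P(x) of degree n over F_q with [x^{n−w}]P(x) = c. -/
open scoped Classical

noncomputable section

/-- `δ_w : Z/(q^n-1)Z → F`, the characteristic function of the set `Ω(w)` of
elements whose canonical representative is `q^{i_1} + ⋯ + q^{i_w}` for some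
`0 ≤ i_1 < ⋯ < i_w ≤ n-1` (for `w = 0` this is the Kronecker delta at `0`). -/
def deltaFn (F : Type*) [Zero F] [One F] (q n w : ℕ) : ZMod (q ^ n - 1) → F :=
  fun k =>
    if ∃ s ∈ Finset.powersetCard w (Finset.range n), k.val = ∑ i ∈ s, q ^ i then 1
    else 0

/-- Convolution of functions on `Z/NZ`: `(f ⊗ g)(i) = ∑_{j+k=i} f(j) g(k)`. -/
def conv {N : ℕ} [NeZero N] {R : Type*} [NonUnitalNonAssocSemiring R]
    (f g : ZMod N → R) : ZMod N → R :=
  fun i => ∑ j : ZMod N, f j * g (i - j)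

/-- The `m`-th convolution power `f^{⊗m}`, with `f^{⊗0} = δ_0`. -/
def convPow {N : ℕ} [NeZero N] {R : Type*} [Semiring R] (f : ZMod N → R) :
    ℕ → ZMod N → R
  | 0 => fun i => if i = 0 then 1 else 0
  | m + 1 => conv f (convPow f m)

/-- `Δ_{w,c} = δ_0 - ((-1)^w δ_w - c δ_0)^{⊗(q-1)} : Z/(q^n-1)Z → F_q`. -/
def Delta (F : Type*) [Field F] (q n w : ℕ) [NeZero (q ^ n - 1)] (c : F) :
    ZMod (q ^ n - 1) → F :=
  fun i => deltaFn F q n 0 i -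
    convPow (fun k => (-1 : F) ^ w * deltaFn F q n w k - c * deltaFn F q n 0 k)
      (q - 1) i

/-!
Evaluate functions on `ℤ/(q^n-1)ℤ` at the nonzero `x ∈ 𝔽_{q^n}`; this Fourier transform turns
convolution into multiplication. At `x`, `Δ_{w,c}` becomes `1 - (a - c)^{q-1}`, where
`a = (-1)^w e_w(x, x^q, …, x^{q^{n-1}}) ∈ 𝔽_q` is the coefficient of `X^{n-w}` in the
characteristic polynomial of `x` over `𝔽_q`, so it vanishes unless `a = c`. If no monic irreducible
polynomial of degree `n` has `c` as that coefficient, every `x` with `a = c` has degree `d < n`,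
so lies in `𝔽_{q^d}` and satisfies `x^M = 1` for `M = (q^n-1)/Φₙ(q)`, a multiple of `q^d - 1`.
Hence `Δ_{w,c}` and its shift by `M` have the same transform, `M` is a period of `Δ_{w,c}`, and
the least period `r` divides `M`.
-/

open Finset Polynomial

section Periods

variable {N : ℕ} {α : Type*} {g : ZMod N → α}

theorem IsLeastPeriod.dvd {r m : ℕ} (hr : IsLeastPeriod g r) (hm : IsPeriodOf g m) : r ∣ m := by
  obtain ⟨hr0, hrper, hrmin⟩ := hr
  have hcast : ((m % r : ℕ) : ZMod N) = m - (m / r : ℕ) * r := by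
    rw [eq_sub_iff_add_eq, ← Nat.cast_mul, ← Nat.cast_add, Nat.mod_add_div']
  have hmod : IsPeriodOf g (m % r) := by
    rw [IsPeriodOf, hcast]
    exact Function.Periodic.sub_period hm (Function.Periodic.nat_mul hrper _)
  exact Nat.dvd_of_mod_eq_zero <| by_contra fun h =>
    (Nat.mod_lt m hr0).not_ge (hrmin _ (Nat.pos_of_ne_zero h) hmod)

end Periods

section Dft

variable {N : ℕ}

theorem pow_val_natCast_of_pow_eq_one {M : Type*} [Monoid M] {x : M} (hx : x ^ N = 1) (m : ℕ) :
    x ^ (m : ZMod N).val = x ^ m := by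
  rw [ZMod.val_natCast, ← pow_eq_pow_mod _ hx]

variable [NeZero N]

theorem pow_val_add_of_pow_eq_one {M : Type*} [Monoid M] {x : M} (hx : x ^ N = 1)
    (a b : ZMod N) : x ^ (a + b).val = x ^ a.val * x ^ b.val := by
  rw [ZMod.val_add, ← pow_eq_pow_mod _ hx, pow_add]

variable {F K : Type*}

section Semiring

variable [CommSemiring F] [CommSemiring K] [Algebra F K]

/-- For `x ^ N = 1`, the Fourier transform of `f` at the character `k ↦ xᵏ` of `ℤ/Nℤ`. -/
def dft (f : ZMod N → F) (x : K) : K := ∑ k, algebraMap F K (f k) * x ^ k.val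

variable {x : K}

theorem dft_conv (f g : ZMod N → F) (hx : x ^ N = 1) :
    dft (conv f g) x = dft f x * dft g x := by
  simp only [dft]
  rw [Finset.sum_mul_sum]
  simp only [conv, map_sum, map_mul, Finset.sum_mul]
  rw [Finset.sum_comm]
  refine Finset.sum_congr rfl fun j _ => Fintype.sum_equiv (Equiv.subRight j) _ _ fun i => ?_
  rw [Equiv.subRight_apply]
  conv_lhs => rw [← sub_add_cancel i j, pow_val_add_of_pow_eq_one hx, add_sub_cancel_right]
  ring

theorem dft_convPow (f : ZMod N → F) (hx : x ^ N = 1) (m : ℕ) :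
    dft (convPow f m) x = dft f x ^ m := by
  induction m with
  | zero => simp [dft, convPow]
  | succ m ih => rw [convPow, dft_conv _ _ hx, ih, pow_succ, mul_comm]

theorem dft_comp_add_natCast (f : ZMod N → F) (hx : x ^ N = 1) (m : ℕ) :
    dft (fun k => f (k + (m : ZMod N))) x * x ^ m = dft f x := by
  rw [dft, Finset.sum_mul]
  refine Fintype.sum_equiv (Equiv.addRight (m : ZMod N)) _ _ fun k => ?_
  rw [Equiv.coe_addRight, pow_val_add_of_pow_eq_one hx, pow_val_natCast_of_pow_eq_one hx, mul_assoc]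

end Semiring

section Ring

variable [CommRing F] [CommRing K] [Algebra F K] {x : K}

theorem dft_sub (f g : ZMod N → F) : dft (fun k => f k - g k) x = dft f x - dft g x := by
  simp only [dft, map_sub, sub_mul, Finset.sum_sub_distrib]

theorem dft_const_mul (a : F) (f : ZMod N → F) :
    dft (fun k => a * f k) x = algebraMap F K a * dft f x := by
  simp only [dft, map_mul, Finset.mul_sum, mul_assoc]

end Ring

section Field

variable [Field F] [Field K] [Algebra F K] [Fintype K]

theorem eq_zero_of_dft_eq_zero (hN : N < Fintype.card K) {f : ZMod N → F}
    (h : ∀ x : K, x ≠ 0 → dft f x = 0) : f = 0 := by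
  set P : K[X] := ∑ k, monomial k.val (algebraMap F K (f k))
  have hP : P = 0 := by
    refine eq_zero_of_natDegree_lt_card_of_eval_eq_zero P Units.val_injective (fun u => ?_) ?_
    · simpa [P, eval_finsetSum, dft] using h u u.ne_zero
    · rw [Fintype.card_units]
      calc P.natDegree ≤ N - 1 := natDegree_sum_le_of_forall_le _ _ fun k _ =>
              (natDegree_monomial_le _).trans (Nat.le_pred_of_lt k.val_lt)
        _ < Fintype.card K - 1 := by have := NeZero.pos N; omega
  funext k
  simpa [P, finsetSum_coeff, coeff_monomial,
    (ZMod.val_injective N).eq_iff] using congr_arg (coeff · k.val) hP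

/-- The transform of `f (· + m) - f` is `(x⁻ᵐ - 1)` times that of `f`, and `N < #K` points
determine a function on `ℤ/Nℤ`. -/
theorem isPeriodOf_of_dft (hK : Fintype.card K = N + 1) {f : ZMod N → F} {m : ℕ}
    (h : ∀ x : K, x ≠ 0 → dft f x = 0 ∨ x ^ m = 1) : IsPeriodOf f m := by
  have hdft : ∀ x : K, x ≠ 0 → dft (fun k => f (k + (m : ZMod N)) - f k) x = 0 := by
    intro x hx
    have hxN : x ^ N = 1 := by
      simpa [hK] using FiniteField.pow_card_sub_one_eq_one x hx
    have hshift := dft_comp_add_natCast f hxN m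
    rw [dft_sub]
    rcases h x hx with h0 | h1
    · rw [h0, mul_eq_zero] at hshift
      rw [h0, hshift.resolve_right (pow_ne_zero _ hx), sub_zero]
    · rw [h1, mul_one] at hshift
      rw [hshift, sub_self]
  have hdiff := eq_zero_of_dft_eq_zero (by omega) hdft
  exact fun k => sub_eq_zero.1 (congr_fun hdiff k)

end Field

end Dft

section Omega

variable {q n w : ℕ}

theorem geomSum_lt_pow_sub_one {s : Finset ℕ} (hq : 2 ≤ q) (hn : n ≠ 0) (hs : s ⊆ range n)
    (h : s ≠ range n ∨ 3 ≤ q) : ∑ i ∈ s, q ^ i < q ^ n - 1 := by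
  have hlt : ∑ i ∈ range n, q ^ i < q ^ n := Nat.geomSum_lt hq (by simp)
  rcases h with h | h
  · obtain ⟨j, hj, hjs⟩ := exists_of_ssubset (Finset.ssubset_iff_subset_ne.2 ⟨hs, h⟩)
    have hle : q ^ j + ∑ i ∈ s, q ^ i ≤ ∑ i ∈ range n, q ^ i := by
      rw [← sum_insert hjs]
      exact sum_le_sum_of_subset (insert_subset hj hs)
    have := Nat.one_le_pow j q (by omega)
    omega
  · calc ∑ i ∈ s, q ^ i ≤ ∑ i ∈ range n, q ^ i := sum_le_sum_of_subset hs
      _ = (q ^ n - 1) / (q - 1) := Nat.geomSum_eq hq n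
      _ < q ^ n - 1 := Nat.div_lt_self (by have := Nat.one_lt_pow hn (by omega : 1 < q); omega)
          (by omega)

variable [NeZero (q ^ n - 1)] {F K : Type*}

/-- Below `q ^ n - 1` the base-`q` expansion `s ↦ ∑ i ∈ s, q ^ i` identifies `Ω(w)` with the
`w`-subsets of `range n`; this fails only for `q = 2`, `w = n`, where `2 ^ n - 1 ≡ 0`. -/
theorem dft_deltaFn [CommSemiring F] [CommSemiring K] [Algebra F K] {x : K} (hq : 2 ≤ q)
    (hn : n ≠ 0) (hwq : w ≠ n ∨ 3 ≤ q) :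
    dft (deltaFn F q n w) x = ∑ s ∈ powersetCard w (range n), ∏ i ∈ s, x ^ q ^ i := by
  set e : Finset ℕ → ZMod (q ^ n - 1) := fun s => ((∑ i ∈ s, q ^ i : ℕ) : ZMod (q ^ n - 1))
  have he : ∀ s ∈ powersetCard w (range n), (e s).val = ∑ i ∈ s, q ^ i := fun s hs => by
    rw [mem_powersetCard] at hs
    refine ZMod.val_cast_of_lt (geomSum_lt_pow_sub_one hq hn hs.1 (hwq.imp (fun hw h => ?_) id))
    rw [h, card_range] at hs
    exact hw hs.2.symm
  have himage : univ.filter (fun k : ZMod (q ^ n - 1) =>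
      ∃ s ∈ powersetCard w (range n), k.val = ∑ i ∈ s, q ^ i) =
      (powersetCard w (range n)).image e := by
    ext k
    simp only [mem_filter, mem_univ, true_and, mem_image]
    refine exists_congr fun s => and_congr_right fun hs => ?_
    rw [← he s hs, eq_comm, (ZMod.val_injective _).eq_iff]
  simp only [dft, deltaFn, apply_ite, map_one, map_zero, ite_mul, one_mul, zero_mul]
  rw [← sum_filter, himage, sum_image fun s hs t ht hst =>
    geomSum_injective hq (by dsimp only; rw [← he s hs, ← he t ht, hst])]
  exact sum_congr rfl fun s hs => by rw [he s hs, prod_pow_eq_pow_sum]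

theorem dft_Delta [Field F] [Field K] [Algebra F K] {x : K} (c : F) (hq : 2 ≤ q) (hn : n ≠ 0)
    (hwq : w ≠ n ∨ 3 ≤ q) (hx : x ^ (q ^ n - 1) = 1) :
    dft (Delta F q n w c) x = 1 - ((-1) ^ w * ∑ s ∈ powersetCard w (range n), ∏ i ∈ s, x ^ q ^ i
      - algebraMap F K c) ^ (q - 1) := by
  have hδ₀ : dft (deltaFn F q n 0) x = 1 := by
    simpa using dft_deltaFn hq hn (Or.inl (Ne.symm hn))
  unfold Delta
  rw [dft_sub, hδ₀, dft_convPow _ hx, dft_sub, dft_const_mul, dft_const_mul, hδ₀,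
    dft_deltaFn hq hn hwq]
  simp

end Omega

section Conjugates

variable {K : Type*} [Field K] {q n : ℕ} {x : K}

/-- `∏_{i<n} (X - x^{q^i})`; for `x` in `𝔽_{q^n}` this is the characteristic polynomial of `x`
over `𝔽_q`. -/
def conjugatePoly (q n : ℕ) (x : K) : K[X] := ∏ i ∈ range n, (X - C (x ^ q ^ i))

theorem conjugatePoly_monic : (conjugatePoly q n x).Monic :=
  monic_prod_of_monic _ _ fun _ _ => monic_X_sub_C _

theorem natDegree_conjugatePoly : (conjugatePoly q n x).natDegree = n := by
  rw [conjugatePoly, natDegree_finsetProd_X_sub_C_eq_card, card_range]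

theorem eval_conjugatePoly_self (hn : n ≠ 0) : (conjugatePoly q n x).eval x = 0 := by
  rw [conjugatePoly, eval_prod]
  exact prod_eq_zero (mem_range.2 (Nat.pos_of_ne_zero hn)) (by simp)

theorem coeff_conjugatePoly {w : ℕ} (hw : w ≤ n) :
    (conjugatePoly q n x).coeff (n - w) =
      (-1) ^ w * ∑ s ∈ powersetCard w (range n), ∏ i ∈ s, x ^ q ^ i := by
  have h := Multiset.prod_X_sub_C_coeff ((range n).val.map fun i => x ^ q ^ i)
    (k := n - w) (by simp)
  rw [Multiset.map_map, Multiset.card_map, card_val, card_range, Nat.sub_sub_self hw,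
    esymm_map_val] at h
  exact h

theorem map_conjugatePoly_of_pow_eq_self (φ : K →+* K) (hφ : ∀ y, φ y = y ^ q)
    (hx : x ^ q ^ n = x) : (conjugatePoly q n x).map φ = conjugatePoly q n x := by
  have hshift : (conjugatePoly q n x).map φ = ∏ i ∈ range n, (X - C (x ^ q ^ (i + 1))) := by
    simp only [conjugatePoly, Polynomial.map_prod, Polynomial.map_sub, map_X, map_C, hφ, ← pow_mul,
      ← pow_succ]
  have hcyc := (prod_range_succ (fun i => X - C (x ^ q ^ i)) n).symm.trans
    (prod_range_succ' (fun i => X - C (x ^ q ^ i)) n)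
  rw [hx, pow_zero, pow_one] at hcyc
  rw [hshift, conjugatePoly, mul_right_cancel₀ (X_sub_C_ne_zero x) hcyc.symm]

end Conjugates

section Lift

variable {F K : Type*} [Field F] [Field K] [Algebra F K] {x : K} {q n : ℕ} {P : F[X]}

theorem monic_and_natDegree_of_map_eq_conjugatePoly
    (hP : P.map (algebraMap F K) = conjugatePoly q n x) : P.Monic ∧ P.natDegree = n := by
  have hinj := (algebraMap F K).injective
  refine ⟨hinj.monic_map_iff.2 (hP ▸ conjugatePoly_monic), ?_⟩
  rw [← natDegree_map_eq_of_injective hinj, hP, natDegree_conjugatePoly]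

theorem natDegree_minpoly_lt_of_map_eq_conjugatePoly (hn : n ≠ 0) (hx : IsIntegral F x)
    (hP : P.map (algebraMap F K) = conjugatePoly q n x) (hirr : ¬ Irreducible P) :
    (minpoly F x).natDegree < n := by
  obtain ⟨hmonic, hdeg⟩ := monic_and_natDegree_of_map_eq_conjugatePoly hP
  have hdvd : minpoly F x ∣ P := minpoly.dvd F x (by
    rw [aeval_def, eval₂_eq_eval_map, hP, eval_conjugatePoly_self hn])
  refine hdeg ▸ lt_of_le_of_ne (natDegree_le_of_dvd hdvd hmonic.ne_zero) fun h => hirr ?_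
  rw [eq_of_monic_of_dvd_of_natDegree_le (minpoly.monic hx) hmonic hdvd h.ge]
  exact minpoly.irreducible hx

end Lift

theorem pow_sub_one_dvd_div_cyclotomic_eval {q n d : ℕ} (hq : 2 ≤ q) (hd : d ∣ n) (hdn : d < n) :
    q ^ d - 1 ∣ (q ^ n - 1) / ((cyclotomic n ℤ).eval (q : ℤ)).toNat := by
  have hΦ : 0 < (cyclotomic n ℤ).eval (q : ℤ) := cyclotomic_pos' n (by exact_mod_cast hq)
  have hdvd : ((q : ℤ) ^ d - 1) * (cyclotomic n ℤ).eval (q : ℤ) ∣ (q : ℤ) ^ n - 1 := by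
    simpa using eval_dvd (x := (q : ℤ))
      (X_pow_sub_one_mul_cyclotomic_dvd_X_pow_sub_one_of_dvd ℤ (Nat.mem_properDivisors.2 ⟨hd, hdn⟩))
  have hpow : ∀ k, 1 ≤ q ^ k := fun k => Nat.one_le_pow _ _ (by omega)
  rw [← Int.natCast_dvd_natCast, Int.natCast_div, Int.toNat_of_nonneg hΦ.le,
    Nat.cast_sub (hpow d), Nat.cast_sub (hpow n)]
  push_cast
  rw [mul_comm] at hdvd
  exact Int.dvd_ediv_of_mul_dvd hdvd

section FiniteField

variable {F K : Type*} [Field F] [Fintype F] [Field K] [Algebra F K] {x : K}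

theorem mem_range_algebraMap_of_pow_card_eq_self (hx : x ^ Fintype.card F = x) :
    x ∈ Set.range (algebraMap F K) := by
  set P : F[X] := X ^ Fintype.card F - X
  have hP : P.Monic := monic_X_pow_sub (by rw [degree_X]; exact_mod_cast Fintype.one_lt_card)
  have hroots : P.roots.map (algebraMap F K) = (P.map (algebraMap F K)).roots :=
    hP.roots_map_of_card_eq_natDegree _ (by
      rw [FiniteField.roots_X_pow_card_sub_X,
        FiniteField.X_pow_card_sub_X_natDegree_eq F Fintype.one_lt_card]
      rfl)
  have hxroot : x ∈ (P.map (algebraMap F K)).roots := by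
    rw [mem_roots (hP.map _).ne_zero]
    simp [P, hx]
  rw [← hroots, FiniteField.roots_X_pow_card_sub_X] at hxroot
  obtain ⟨y, -, hy⟩ := Multiset.mem_map.1 hxroot
  exact ⟨y, hy⟩

theorem exists_map_eq_conjugatePoly {n : ℕ} (hx : x ^ Fintype.card F ^ n = x) :
    ∃ P : F[X], P.map (algebraMap F K) = conjugatePoly (Fintype.card F) n x := by
  have hfix := map_conjugatePoly_of_pow_eq_self (FiniteField.frobeniusAlgHom F K : K →+* K)
    (fun _ => rfl) hx
  refine (mem_lifts _).1 ((lifts_iff_coeff_lifts _).2 fun i =>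
    mem_range_algebraMap_of_pow_card_eq_self ?_)
  conv_rhs => rw [← hfix]
  rw [coeff_map]
  rfl

theorem pow_card_pow_natDegree_minpoly (hx : IsIntegral F x) :
    x ^ Fintype.card F ^ (minpoly F x).natDegree = x := by
  have hdvd := ((minpoly.irreducible hx).natDegree_dvd_iff_dvd_X_pow_card_pow_sub_X).1 dvd_rfl
  simpa [sub_eq_zero, Nat.card_eq_fintype_card] using
    aeval_eq_zero_of_dvd_aeval_eq_zero hdvd (minpoly.aeval F x)

theorem pow_div_cyclotomic_eval_eq_one [FiniteDimensional F K] {n : ℕ}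
    (hK : Module.finrank F K = n) (hx0 : x ≠ 0) (hdeg : (minpoly F x).natDegree < n) :
    x ^ ((Fintype.card F ^ n - 1) / ((cyclotomic n ℤ).eval (Fintype.card F : ℤ)).toNat) = 1 := by
  have hx : IsIntegral F x := .of_finite F x
  obtain ⟨e, he⟩ := pow_sub_one_dvd_div_cyclotomic_eval (Fintype.one_lt_card (α := F))
    (hK ▸ minpoly.degree_dvd hx) hdeg
  have hsub : x ^ (Fintype.card F ^ (minpoly F x).natDegree - 1) = 1 := by
    rw [← mul_left_inj' hx0, ← pow_succ, Nat.sub_add_cancel (Nat.one_le_pow _ _ Fintype.card_pos),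
      pow_card_pow_natDegree_minpoly hx, one_mul]
  rw [he, pow_mul, hsub, one_pow]

end FiniteField

theorem exists_irreducible_of_Delta_leastPeriod_general
    (q n w : ℕ) (Fq : Type) [Field Fq] [Fintype Fq] (hcard : Fintype.card Fq = q)
    (hn : 2 ≤ n) (hwn : w ≤ n) (c : Fq) (hq2 : q = 2 → w ≠ n)
    [NeZero (q ^ n - 1)]
    (r : ℕ) (hr : IsLeastPeriod (Delta Fq q n w c) r)
    (hdvd : ¬ r ∣ (q ^ n - 1) / ((Polynomial.cyclotomic n ℤ).eval (q : ℤ)).toNat) :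
    ∃ P : Polynomial Fq, P.Monic ∧ Irreducible P ∧ P.natDegree = n ∧
      P.coeff (n - w) = c := by
  subst hcard
  by_contra! hcon
  have hq : 2 ≤ Fintype.card Fq := Fintype.one_lt_card
  have hwq : w ≠ n ∨ 3 ≤ Fintype.card Fq := by omega
  obtain ⟨p, _⟩ := CharP.exists Fq
  have : Fact p.Prime := ⟨CharP.char_is_prime Fq p⟩
  have : NeZero n := ⟨by omega⟩
  let K := FiniteField.Extension Fq p n
  have : Fintype K := .ofFinite K
  have hK : Fintype.card K = Fintype.card Fq ^ n := by
    rw [Fintype.card_eq_nat_card, FiniteField.natCard_extension, Nat.card_eq_fintype_card]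
  have hKN : Fintype.card K = Fintype.card Fq ^ n - 1 + 1 := by
    have := Nat.one_le_pow n _ (by omega : 0 < Fintype.card Fq)
    omega
  refine hdvd (hr.dvd (isPeriodOf_of_dft hKN fun x hx => ?_))
  obtain ⟨P, hP⟩ := exists_map_eq_conjugatePoly (hK ▸ FiniteField.pow_card x)
  rw [dft_Delta c hq (by omega) hwq (hK ▸ FiniteField.pow_card_sub_one_eq_one x hx),
    ← coeff_conjugatePoly hwn, ← hP, coeff_map, ← map_sub, ← map_pow]
  rcases eq_or_ne (P.coeff (n - w)) c with hc | hc
  · obtain ⟨hmonic, hdeg⟩ := monic_and_natDegree_of_map_eq_conjugatePoly hP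
    exact .inr <| pow_div_cyclotomic_eval_eq_one (FiniteField.finrank_extension Fq p n) hx <|
      natDegree_minpoly_lt_of_map_eq_conjugatePoly (by omega) (.of_finite Fq x) hP
        fun hirr => hcon P hmonic hirr hdeg hc
  · left
    rw [FiniteField.pow_card_sub_one_eq_one _ (sub_ne_zero.2 hc), map_one, sub_self]

/-- Lemma 4.2: if `Δ_{w,c}` has least period `r` with `r ∤ (q^n-1)/Φ_n(q)`,
then there exists a monic irreducible polynomial `P` of degree `n` over `F_q`
with `[x^{n-w}]P(x) = c`. -/
theorem exists_irreducible_of_Delta_leastPeriod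
    (q n w : ℕ) (Fq : Type) [Field Fq] [Fintype Fq] (hcard : Fintype.card Fq = q)
    (hn : 2 ≤ n) (hw1 : 1 ≤ w) (hwn : w ≤ n) (c : Fq) (hq2 : q = 2 → w ≠ n)
    [NeZero (q ^ n - 1)]
    (r : ℕ) (hr : IsLeastPeriod (Delta Fq q n w c) r)
    (hdvd : ¬ r ∣ (q ^ n - 1) / ((Polynomial.cyclotomic n ℤ).eval (q : ℤ)).toNat) :
    ∃ P : Polynomial Fq, P.Monic ∧ Irreducible P ∧ P.natDegree = n ∧
      P.coeff (n - w) = c :=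
  exists_irreducible_of_Delta_leastPeriod_general q n w Fq hcard hn hwn c hq2 r hr hdvd
end
end
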